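/- For every real r ≠ 0, the singular value ratio of data uniformly distributed on the arc, namely σ₂/σ₁ = √(Var₁(T)/Var₂(T)), satisfies lim_{T → 0⁺} (1/T) · √(Var₁(T)/Var₂(T)) = 1/√15; i.e., the singular value ratio is asymptotically T/√15 as the half-angle T of the arc tends to 0. -/

import Mathlib

/-!
With `u = 2T`, both variances are elementary integrals and
`Var₁ / (T² Var₂) = 4 · ((u² + u sin u - 4 (1 - cos u)) / u⁶) / ((u - sin u) / u³)`.
The numerator is `u⁶/360 + O(u⁸)` and `u - sin u = u³/6 + O(u⁵)`, so the ratio tends to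
`4 · (1/360) / (1/6) = 1/15`. The required Taylor estimates hold on `[0, ∞)` because the partial
sums of the sine and cosine series alternately over- and underestimate there: integrating one
such inequality from `0` yields the next.
-/

open MeasureTheory intervalIntegral Filter

/-- Mean of the first coordinate under the uniform distribution on the arc. -/
noncomputable def mu1 (r T : ℝ) : ℝ := (1 / (2 * T)) * ∫ t in (-T)..T, r * Real.cos t

/-- Variance of the first coordinate under the uniform distribution on the arc. -/
noncomputable def Var1 (r T : ℝ) : ℝ :=
  (1 / (2 * T)) * ∫ t in (-T)..T, (r * Real.cos t - mu1 r T) ^ 2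

/-- Variance of the second coordinate under the uniform distribution on the arc. -/
noncomputable def Var2 (r T : ℝ) : ℝ :=
  (1 / (2 * T)) * ∫ t in (-T)..T, (r * Real.sin t) ^ 2

open Real Set Topology
open scoped Nat

noncomputable def sinTaylor (n : ℕ) (x : ℝ) : ℝ :=
  ∑ k ∈ Finset.range n, (-1) ^ k * x ^ (2 * k + 1) / (2 * k + 1)!

noncomputable def cosTaylor (n : ℕ) (x : ℝ) : ℝ :=
  ∑ k ∈ Finset.range n, (-1) ^ k * x ^ (2 * k) / (2 * k)!

theorem hasDerivAt_sinTaylor (n : ℕ) (x : ℝ) : HasDerivAt (sinTaylor n) (cosTaylor n x) x := by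
  refine (HasDerivAt.fun_sum fun k _ => ((hasDerivAt_pow _ x).const_mul _).div_const _).congr_deriv
    (Finset.sum_congr rfl fun k _ => ?_)
  rw [Nat.factorial_succ]
  push_cast
  field_simp

theorem hasDerivAt_cosTaylor_succ (n : ℕ) (x : ℝ) :
    HasDerivAt (cosTaylor (n + 1)) (-sinTaylor n x) x := by
  have h : cosTaylor (n + 1) = fun y =>
      ∑ k ∈ Finset.range n, (-1 : ℝ) ^ (k + 1) * y ^ (2 * k + 2) / (2 * k + 2)! + 1 := by
    ext y
    simp [cosTaylor, Finset.sum_range_succ', mul_add]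
  rw [h, sinTaylor, ← Finset.sum_neg_distrib]
  refine ((HasDerivAt.fun_sum fun k _ =>
    ((hasDerivAt_pow _ x).const_mul _).div_const _).add_const 1).congr_deriv
    (Finset.sum_congr rfl fun k _ => ?_)
  rw [show 2 * k + 2 = (2 * k + 1) + 1 by ring, Nat.factorial_succ]
  push_cast
  field_simp
  ring

theorem nonneg_of_hasDerivAt_nonneg {f f' : ℝ → ℝ} (h₀ : f 0 = 0)
    (hf : ∀ x, HasDerivAt f (f' x) x) (hf' : ∀ x, 0 ≤ x → 0 ≤ f' x) {x : ℝ}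
    (hx : 0 ≤ x) : 0 ≤ f x := by
  have hmono : MonotoneOn f (Ici 0) :=
    monotoneOn_of_hasDerivWithinAt_nonneg (convex_Ici 0)
      (fun y _ => (hf y).continuousAt.continuousWithinAt) (fun y _ => (hf y).hasDerivWithinAt)
      (fun y hy => hf' y (interior_subset hy))
  simpa [h₀] using hmono self_mem_Ici hx hx

theorem cosTaylor_sinTaylor_alternating (n : ℕ) {x : ℝ} (hx : 0 ≤ x) :
    0 ≤ (-1) ^ n * (cosTaylor (n + 1) x - cos x) ∧
      0 ≤ (-1) ^ n * (sinTaylor (n + 1) x - sin x) := by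
  induction n generalizing x with
  | zero => simp [cosTaylor, sinTaylor, cos_le_one, sin_le hx]
  | succ n ih =>
    have hcos {y : ℝ} (hy : 0 ≤ y) : 0 ≤ (-1) ^ (n + 1) * (cosTaylor (n + 2) y - cos y) :=
      nonneg_of_hasDerivAt_nonneg (by simp [cosTaylor, Finset.sum_range_succ'])
        (fun z => ((hasDerivAt_cosTaylor_succ (n + 1) z).sub (hasDerivAt_cos z)).const_mul _)
        (fun z hz => (ih hz).2.trans_eq (by ring)) hy
    refine ⟨hcos hx, nonneg_of_hasDerivAt_nonneg (by simp [sinTaylor])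
      (fun z => ((hasDerivAt_sinTaylor (n + 2) z).sub (hasDerivAt_sin z)).const_mul _)
      (fun z hz => hcos hz) hx⟩

theorem tendsto_nhdsGT_of_abs_sub_le_mul_sq {h : ℝ → ℝ} {c K : ℝ}
    (hh : ∀ u, 0 < u → |h u - c| ≤ K * u ^ 2) : Tendsto h (𝓝[>] 0) (𝓝 c) := by
  have hK : Tendsto (fun u : ℝ => K * u ^ 2) (𝓝[>] 0) (𝓝 0) :=
    ((by fun_prop : Continuous fun u : ℝ => K * u ^ 2).tendsto' 0 0 (by simp)).mono_left
      nhdsWithin_le_nhds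
  rw [tendsto_iff_norm_sub_tendsto_zero]
  exact squeeze_zero' (.of_forall fun u => norm_nonneg _)
    (eventually_nhdsWithin_of_forall hh) hK

theorem sin_le_sub_cube_add_pow_five {x : ℝ} (hx : 0 ≤ x) :
    sin x ≤ x - x ^ 3 / 6 + x ^ 5 / 120 := by
  have := (cosTaylor_sinTaylor_alternating 2 hx).2
  norm_num [sinTaylor, Finset.sum_range_succ, Nat.factorial] at this
  linarith

theorem abs_sub_sin_div_cube_sub_le {u : ℝ} (hu : 0 < u) :
    |(u - sin u) / u ^ 3 - 1 / 6| ≤ 1 / 120 * u ^ 2 := by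
  have hu3 : 0 < u ^ 3 := by positivity
  rw [show (u - sin u) / u ^ 3 - 1 / 6 = (u - sin u - u ^ 3 / 6) / u ^ 3 by field_simp,
    abs_div, abs_of_pos hu3, div_le_iff₀ hu3, abs_le]
  constructor <;> nlinarith [sin_ge_sub_cube hu.le, sin_le_sub_cube_add_pow_five hu.le]

theorem abs_sq_add_mul_sin_sub_div_pow_six_sub_le {u : ℝ} (hu : 0 < u) :
    |(u ^ 2 + u * sin u - 4 * (1 - cos u)) / u ^ 6 - 1 / 360| ≤ 1 / 5040 * u ^ 2 := by
  have hsin : u - u ^ 3 / 6 + u ^ 5 / 120 - u ^ 7 / 5040 ≤ sin u := by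
    have := (cosTaylor_sinTaylor_alternating 3 hu.le).2
    norm_num [sinTaylor, Finset.sum_range_succ, Nat.factorial] at this
    linarith
  have hcos : 1 - u ^ 2 / 2 + u ^ 4 / 24 - u ^ 6 / 720 ≤ cos u := by
    have := (cosTaylor_sinTaylor_alternating 3 hu.le).1
    norm_num [cosTaylor, Finset.sum_range_succ, Nat.factorial] at this
    linarith
  have hcos' : cos u ≤ 1 - u ^ 2 / 2 + u ^ 4 / 24 - u ^ 6 / 720 + u ^ 8 / 40320 := by
    have := (cosTaylor_sinTaylor_alternating 4 hu.le).1
    norm_num [cosTaylor, Finset.sum_range_succ, Nat.factorial] at this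
    linarith
  have hu6 : 0 < u ^ 6 := by positivity
  rw [show (u ^ 2 + u * sin u - 4 * (1 - cos u)) / u ^ 6 - 1 / 360 =
      (u ^ 2 + u * sin u - 4 * (1 - cos u) - u ^ 6 / 360) / u ^ 6 by field_simp,
    abs_div, abs_of_pos hu6, div_le_iff₀ hu6, abs_le]
  constructor <;> nlinarith [sin_le_sub_cube_add_pow_five hu.le]

theorem tendsto_sub_sin_div_cube :
    Tendsto (fun u => (u - sin u) / u ^ 3) (𝓝[>] 0) (𝓝 (1 / 6)) :=
  tendsto_nhdsGT_of_abs_sub_le_mul_sq fun _ hu => abs_sub_sin_div_cube_sub_le hu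

theorem tendsto_sq_add_mul_sin_sub_div_pow_six :
    Tendsto (fun u => (u ^ 2 + u * sin u - 4 * (1 - cos u)) / u ^ 6) (𝓝[>] 0) (𝓝 (1 / 360)) :=
  tendsto_nhdsGT_of_abs_sub_le_mul_sq fun _ hu => abs_sq_add_mul_sin_sub_div_pow_six_sub_le hu

theorem mul_integral_sub_mul_integral_sq {f : ℝ → ℝ} {a b c : ℝ} (hc : c * (b - a) = 1)
    (hf : IntervalIntegrable f volume a b)
    (hf2 : IntervalIntegrable (fun x => f x ^ 2) volume a b) :
    c * ∫ x in a..b, (f x - c * ∫ y in a..b, f y) ^ 2 =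
      c * (∫ x in a..b, f x ^ 2) - (c * ∫ x in a..b, f x) ^ 2 := by
  set m := c * ∫ y in a..b, f y
  have hexp : ∀ x, (f x - m) ^ 2 = f x ^ 2 - 2 * m * f x + m ^ 2 := fun x => by ring
  simp only [hexp]
  rw [intervalIntegral.integral_add (hf2.sub (hf.const_mul _)) intervalIntegrable_const,
    intervalIntegral.integral_sub hf2 (hf.const_mul _), intervalIntegral.integral_const_mul,
    intervalIntegral.integral_const, smul_eq_mul]
  linear_combination m ^ 2 * hc

theorem Var2_eq (r : ℝ) {T : ℝ} (hT : T ≠ 0) :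
    Var2 r T = r ^ 2 * (2 * T - sin (2 * T)) / (4 * T) := by
  simp only [Var2, mul_pow, intervalIntegral.integral_const_mul, integral_sin_sq, sin_neg, cos_neg,
    sin_two_mul]
  field_simp
  ring

theorem Var1_eq (r : ℝ) {T : ℝ} (hT : T ≠ 0) :
    Var1 r T =
      r ^ 2 * ((2 * T) ^ 2 + 2 * T * sin (2 * T) - 4 * (1 - cos (2 * T))) / (8 * T ^ 2) := by
  have hc : 1 / (2 * T) * (T - -T) = 1 := by field_simp; ring
  rw [Var1, mu1, mul_integral_sub_mul_integral_sq hc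
    (Continuous.intervalIntegrable (by fun_prop) _ _)
    (Continuous.intervalIntegrable (by fun_prop) _ _)]
  simp only [mul_pow, intervalIntegral.integral_const_mul, integral_cos_sq, integral_cos, sin_neg,
    cos_neg, sin_two_mul, cos_two_mul]
  field_simp
  linear_combination (-32 * r ^ 2) * sin_sq_add_cos_sq T

theorem Var1_div_Var2_div_sq {r T : ℝ} (hr : r ≠ 0) (hT : 0 < T) :
    Var1 r T / Var2 r T / T ^ 2 =
      4 * (((2 * T) ^ 2 + 2 * T * sin (2 * T) - 4 * (1 - cos (2 * T))) / (2 * T) ^ 6) /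
        ((2 * T - sin (2 * T)) / (2 * T) ^ 3) := by
  have hsin : 2 * T - sin (2 * T) ≠ 0 := (sub_pos.2 (sin_lt (by positivity))).ne'
  rw [Var1_eq r hT.ne', Var2_eq r hT.ne']
  field_simp
  ring

/-- for every real `r ≠ 0`, the singular value ratio
`σ₂/σ₁ = √(Var₁(T)/Var₂(T))` satisfies
`lim_{T → 0⁺} (1/T) · √(Var₁(T)/Var₂(T)) = 1/√15`. -/
theorem singular_value_ratio_asymptotics (r : ℝ) (hr : r ≠ 0) :
    Tendsto (fun T : ℝ => (1 / T) * Real.sqrt (Var1 r T / Var2 r T))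
      (nhdsWithin 0 (Set.Ioi 0)) (nhds (1 / Real.sqrt 15)) := by
  have hlim : Tendsto (fun u => 4 * ((u ^ 2 + u * sin u - 4 * (1 - cos u)) / u ^ 6) /
      ((u - sin u) / u ^ 3)) (𝓝[>] 0) (𝓝 (1 / 15)) := by
    have := (tendsto_sq_add_mul_sin_sub_div_pow_six.const_mul 4).div tendsto_sub_sin_div_cube
      (by norm_num)
    rwa [show (4 : ℝ) * (1 / 360) / (1 / 6) = 1 / 15 by norm_num] at this
  have hdouble : Tendsto (fun T : ℝ => 2 * T) (𝓝[>] 0) (𝓝[>] 0) :=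
    tendsto_nhdsWithin_iff.2
      ⟨by simpa using ((continuous_const_mul (2 : ℝ)).tendsto 0).mono_left nhdsWithin_le_nhds,
        eventually_nhdsWithin_of_forall fun T (hT : 0 < T) => by simpa using hT⟩
  rw [one_div (√15), ← sqrt_inv, ← one_div]
  refine (hlim.comp hdouble).sqrt.congr' (eventually_nhdsWithin_of_forall fun T (hT : 0 < T) => ?_)
  dsimp only [Function.comp_apply]
  rw [← Var1_div_Var2_div_sq hr hT, sqrt_div' _ (sq_nonneg T), sqrt_sq hT.le,
    div_eq_inv_mul, one_div]
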